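/- arXiv:2105.01462 — 6 statements merged into one kernel-verified Lean document; each statement's English description precedes it below -/
import Mathlib

section
/- Let (X, a) be a separated copowered V-category, let (X, ≤_a) be its underlying order with action ρ(v, x) = v ⊙ x, and let ã be the V-structure induced back from this action, i.e., ã(x, y) = ⨆{v | v ⊙ x ≤_a y}. Then ã = a. -/
/-- The internal hom of a quantale: `[u, w] = sSup {v | u * v ≤ w}`. -/
def vhom {V : Type*} [CompleteLattice V] [Mul V] (u w : V) : V :=
  sSup {v : V | u * v ≤ w}

/-- For a separated copowered `V`-category `(X, a)`, the `V`-structure induced by the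
copower action on the underlying order coincides with `a`. -/
theorem induced_structure_eq_original
    {V X : Type*} [CommMonoid V] [CompleteLattice V] [IsQuantale V]
    (a : X → X → V)
    (ha_refl : ∀ x : X, (1 : V) ≤ a x x)
    (ha_trans : ∀ x y z : X, a x y * a y z ≤ a x z)
    (hsep : ∀ x y : X, (1 : V) ≤ a x y → (1 : V) ≤ a y x → x = y)
    (cop : V → X → X)
    (hcop : ∀ (u : V) (x y : X), a (cop u x) y = vhom u (a x y)) :
    ∀ x y : X, sSup {v : V | (1 : V) ≤ a (cop v x) y} = a x y := by
  intro x y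
  have hset : {v : V | (1 : V) ≤ a (cop v x) y} = {v : V | v ≤ a x y} := by
    ext v
    simp only [Set.mem_setOf_eq, hcop, vhom]
    constructor
    · intro h
      calc v = v * 1 := (mul_one v).symm
        _ ≤ v * sSup {w : V | v * w ≤ a x y} := mul_le_mul_right h v
        _ = ⨆ w ∈ {w : V | v * w ≤ a x y}, v * w := mul_sSup_distrib
        _ ≤ a x y := by
            apply iSup₂_le
            intro w hw
            exact hw
    · intro h
      apply le_sSup
      simpa using h
  rw [hset]
  apply le_antisymm
  · exact sSup_le fun v hv => hv
  · exact le_sSup le_rfl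
end

section
/- Conversely, let (X, ≤_X, ρ) be a poset with a quantale action (unital, associative, sup-preserving in V), let a be the induced V-structure a(x,y) = ⨆{v | ρ(v,x) ≤_X y}, and let ≤_a be the underlying order of (X, a). Then ≤_a coincides with ≤_X. -/
/-- For a poset with a quantale action, the underlying order of the induced
`V`-category coincides with the original order. -/
theorem induced_order_eq_original
    {V X : Type*} [CommMonoid V] [CompleteLattice V] [IsQuantale V] [PartialOrder X]
    (ρ : V → X → X)
    (hmono : ∀ {v v' : V} {x x' : X}, v ≤ v' → x ≤ x' → ρ v x ≤ ρ v' x')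
    (hone : ∀ x : X, ρ 1 x = x)
    (hassoc : ∀ (v u : V) (x : X), ρ v (ρ u x) = ρ (v * u) x)
    (hsup : ∀ (S : Set V) (x y : X), (ρ (sSup S) x ≤ y ↔ ∀ v ∈ S, ρ v x ≤ y)) :
    ∀ x y : X, ((1 : V) ≤ sSup {v : V | ρ v x ≤ y} ↔ x ≤ y) := by
  intro x y
  constructor
  · intro h
    have h2 : ρ (sSup {v : V | ρ v x ≤ y}) x ≤ y :=
      (hsup _ x y).mpr (fun v hv => hv)
    calc x = ρ 1 x := (hone x).symm
      _ ≤ ρ (sSup {v : V | ρ v x ≤ y}) x := hmono h le_rfl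
      _ ≤ y := h2
  · intro h
    exact le_sSup (by simpa [hone] using h)
end

section
/- Conversely, let Q be a quantale and ρ : V × Q → Q an action of a commutative quantale V (sup-preserving in each variable, unital, associative) which is also a monoid homomorphism, i.e., ρ(v₁ ⊗ v₂, q₁ * q₂) = ρ(v₁, q₁) * ρ(v₂, q₂) and ρ(k, 1_Q) = 1_Q. Then f : V → Q defined by f(v) = ρ(v, 1_Q) is a quantale morphism, and for all v ∈ V, q ∈ Q: f(v) * q = ρ(v, q) = q * f(v). -/
/-- Conversely, an action `ρ` of `V` on a quantale `Q` which is a monoid homomorphism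
gives a quantale morphism `f v = ρ v 1` whose image is central: `f v * q = ρ v q = q * f v`. -/
theorem action_induces_central_morphism
    {V Q : Type*} [CommMonoid V] [CompleteLattice V] [IsQuantale V]
    [Monoid Q] [CompleteLattice Q] [IsQuantale Q]
    (ρ : V → Q → Q)
    (hsup₁ : ∀ (S : Set V) (q : Q), ρ (sSup S) q = ⨆ v ∈ S, ρ v q)
    (hsup₂ : ∀ (v : V) (S : Set Q), ρ v (sSup S) = ⨆ q ∈ S, ρ v q)
    (hone : ∀ q : Q, ρ 1 q = q)
    (hassoc : ∀ (v u : V) (q : Q), ρ v (ρ u q) = ρ (v * u) q)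
    (hmonhom : ∀ (v₁ v₂ : V) (q₁ q₂ : Q),
        ρ (v₁ * v₂) (q₁ * q₂) = ρ v₁ q₁ * ρ v₂ q₂)
    (hmonone : ρ 1 1 = 1) :
    -- f v := ρ v 1 is a quantale morphism
    (∀ S : Set V, ρ (sSup S) 1 = ⨆ v ∈ S, ρ v 1) ∧
    (∀ v w : V, ρ (v * w) 1 = ρ v 1 * ρ w 1) ∧
    (ρ (1 : V) (1 : Q) = 1) ∧
    -- and f v * q = ρ v q = q * f v
    (∀ (v : V) (q : Q), ρ v 1 * q = ρ v q ∧ ρ v q = q * ρ v 1) := by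
  refine ⟨fun S => hsup₁ S 1, fun v w => by rw [← hmonhom, one_mul], hmonone, fun v q => ?_⟩
  constructor
  · rw [← hone q, hassoc, ← hmonhom, one_mul, mul_one]
  · have := hmonhom 1 v q 1
    rw [hone, mul_one, one_mul] at this
    exact this
end

section
/- With the strength st as above and costrength st'_{X,Y}(ψ, y)(x, y') = ψ(x) ⊗ u_Y(y)(y'), the V-powerset monad P_V is commutative: n_{X×Y} ∘ P_V(st'_{X,Y}) ∘ st_{P_V X, Y} = n_{X×Y} ∘ P_V(st_{X,Y}) ∘ st'_{X, P_V Y} as maps P_V(X) × P_V(Y) → P_V(X × Y), and both composites send (ψ, φ) to the function (x, y) ↦ ψ(x) ⊗ φ(y). -/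
variable {V : Type*} [CommMonoid V] [CompleteLattice V]

/-- Unit of the `V`-powerset monad. -/
def dirac {X : Type*} (x x' : X) : V := ⨆ _ : x = x', (1 : V)

/-- Functorial action of the `V`-powerset monad. -/
def pvMap {X Y : Type*} (f : X → Y) (φ : X → V) : Y → V :=
  fun y => ⨆ (x : X) (_ : f x = y), φ x

/-- Multiplication of the `V`-powerset monad. -/
def pvMul {X : Type*} (Φ : (X → V) → V) : X → V :=
  fun x => ⨆ φ : X → V, Φ φ * φ x

/-- The strength. -/
def pvSt {X Y : Type*} (x : X) (φ : Y → V) : X × Y → V :=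
  fun p => dirac x p.1 * φ p.2

/-- The costrength `st' (ψ, y) (x, y') = ψ x ⊗ u_Y(y)(y')`. -/
def pvSt' {X Y : Type*} (ψ : X → V) (y : Y) : X × Y → V :=
  fun p => ψ p.1 * dirac y p.2

section Aux

variable [IsQuantale V]

lemma bot_mul' (x : V) : (⊥ : V) * x = ⊥ := by
  rw [← sSup_empty, sSup_mul_distrib]; simp

lemma mul_bot' (x : V) : x * (⊥ : V) = ⊥ := by
  rw [← sSup_empty, mul_sSup_distrib]; simp

lemma dirac_self {X : Type*} (x : X) : (dirac x x : V) = 1 := by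
  simp [dirac]

lemma dirac_ne {X : Type*} {x x' : X} (h : x ≠ x') : (dirac x x' : V) = ⊥ := by
  simp [dirac, h]

lemma iSup_mul'' {ι : Sort*} (f : ι → V) (x : V) : (⨆ i, f i) * x = ⨆ i, f i * x := by
  rw [iSup, sSup_mul_distrib, iSup_range]

lemma pvMul_pvMap {A B : Type*} (f : A → B → V) (g : A → V) (b : B) :
    pvMul (pvMap f g) b = ⨆ a, g a * f a b := by
  unfold pvMul pvMap
  simp only [iSup_mul'']
  rw [iSup_comm]
  congr 1
  funext a
  simp

end Aux

/-- The `V`-powerset monad is commutative: the two composites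
`n ∘ P_V(st') ∘ st` and `n ∘ P_V(st) ∘ st'` agree and both send `(ψ, φ)` to
`(x, y) ↦ ψ x ⊗ φ y`. -/
theorem pv_monad_commutative
    [IsQuantale V] {X Y : Type*} :
    ∀ (ψ : X → V) (φ : Y → V),
      (pvMul (pvMap (fun q : (X → V) × Y => pvSt' q.1 q.2) (pvSt ψ φ)) =
        pvMul (pvMap (fun q : X × (Y → V) => pvSt q.1 q.2) (pvSt' ψ φ))) ∧
      (pvMul (pvMap (fun q : (X → V) × Y => pvSt' q.1 q.2) (pvSt ψ φ)) =
        fun p : X × Y => ψ p.1 * φ p.2) := by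
  intro ψ φ
  have h1 : pvMul (pvMap (fun q : (X → V) × Y => pvSt' q.1 q.2) (pvSt ψ φ)) =
      fun p : X × Y => ψ p.1 * φ p.2 := by
    funext p
    rw [pvMul_pvMap]
    apply le_antisymm
    · apply iSup_le
      rintro ⟨ψ', y'⟩
      by_cases hψ : ψ' = ψ
      · by_cases hy : y' = p.2
        · subst hψ hy
          simp [pvSt, pvSt', dirac_self, mul_comm]
        · subst hψ
          simp [pvSt, pvSt', dirac_ne hy, mul_bot']
      · simp [pvSt, pvSt', dirac_ne (fun h => hψ h.symm), bot_mul', mul_bot']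
    · calc ψ p.1 * φ p.2
          = pvSt ψ φ (ψ, p.2) * pvSt' ψ p.2 p := by
            simp [pvSt, pvSt', dirac_self, mul_comm]
        _ ≤ _ := le_iSup (fun q : (X → V) × Y => pvSt ψ φ q * pvSt' q.1 q.2 p) (ψ, p.2)
  have h2 : pvMul (pvMap (fun q : X × (Y → V) => pvSt q.1 q.2) (pvSt' ψ φ)) =
      fun p : X × Y => ψ p.1 * φ p.2 := by
    funext p
    rw [pvMul_pvMap]
    apply le_antisymm
    · apply iSup_le
      rintro ⟨x', φ'⟩
      by_cases hφ : φ' = φ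
      · by_cases hx : x' = p.1
        · subst hφ hx
          simp [pvSt, pvSt', dirac_self, mul_comm]
        · subst hφ
          simp [pvSt, pvSt', dirac_ne hx, mul_bot', bot_mul']
      · simp [pvSt, pvSt', dirac_ne (fun h => hφ h.symm), bot_mul', mul_bot']
    · calc ψ p.1 * φ p.2
          = pvSt' ψ φ (p.1, φ) * pvSt p.1 φ p := by
            simp [pvSt, pvSt', dirac_self, mul_comm]
        _ ≤ _ := le_iSup (fun q : X × (Y → V) => pvSt' ψ φ q * pvSt q.1 q.2 p) (p.1, φ)
  exact ⟨h1.trans h2.symm, h1⟩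
end

section
/- For the extension of the list monad L to V-relations, defined on r : X ⇸ Y by (Lr)(x̲, y̲) = r(x₁,y₁) ⊗ ... ⊗ r(xₙ,yₙ) if the lists x̲ and y̲ have equal length n, and ⊥ otherwise, one has: L(1_X) = 1_{LX}, L(s ∘ r) = Ls ∘ Lr, and L(r°) = (Lr)°, i.e., the extension is functorial and preserves the involution. -/
variable {V : Type*} [CommMonoid V] [CompleteLattice V]

/-- The extension of the list monad to `V`-relations: `(Lr)(x̲, y̲)` is the product
`r x₁ y₁ ⊗ ... ⊗ r xₙ yₙ` if the lists have the same length, and `⊥` otherwise. -/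
def Lrel {X Y : Type*} (r : X → Y → V) : List X → List Y → V
  | [], [] => 1
  | x :: xs, y :: ys => r x y * Lrel r xs ys
  | [], _ :: _ => ⊥
  | _ :: _, [] => ⊥

open Quantale

theorem iSup_list_eq_nil_sup_iSup_cons {α Y : Type*} [CompleteLattice α] (f : List Y → α) :
    ⨆ ys, f ys = f [] ⊔ ⨆ (y) (ys), f (y :: ys) := by
  refine le_antisymm (iSup_le fun ys => ?_)
    (sup_le (le_iSup f []) (iSup₂_le fun y ys => le_iSup f _))
  cases ys with
  | nil => exact le_sup_left
  | cons y ys => exact le_sup_of_le_right (le_iSup₂ (f := fun y ys => f (y :: ys)) y ys)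

theorem Lrel_flip {X Y : Type*} (r : X → Y → V) (xs : List X) (ys : List Y) :
    Lrel (flip r) ys xs = Lrel r xs ys := by
  induction xs generalizing ys with
  | nil => cases ys <;> rfl
  | cons x xs ih => cases ys <;> simp [Lrel, flip, ih]

section Quantale

variable [IsQuantale V]

theorem Lrel_id {X : Type*} (xs ys : List X) :
    Lrel (fun x x' : X => ⨆ _ : x = x', (1 : V)) xs ys = ⨆ _ : xs = ys, (1 : V) := by
  induction xs generalizing ys with
  | nil => cases ys <;> simp [Lrel]
  | cons x xs ih =>
    cases ys with
    | nil => simp [Lrel]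
    | cons y ys =>
      simp only [Lrel, ih, List.cons.injEq]
      by_cases hxy : x = y <;> by_cases hl : xs = ys <;> simp [hxy, hl]

theorem Lrel_comp {X Y Z : Type*} (r : X → Y → V) (s : Y → Z → V) (xs : List X)
    (zs : List Z) :
    Lrel (fun x z => ⨆ y, r x y * s y z) xs zs = ⨆ ys, Lrel r xs ys * Lrel s ys zs := by
  induction xs generalizing zs with
  | nil => cases zs <;> simp [iSup_list_eq_nil_sup_iSup_cons, Lrel]
  | cons x xs ih =>
    cases zs with
    | nil => simp [iSup_list_eq_nil_sup_iSup_cons, Lrel]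
    | cons z zs =>
      calc (⨆ y, r x y * s y z) * Lrel (fun x z => ⨆ y, r x y * s y z) xs zs
          = ⨆ (y) (ys), r x y * s y z * (Lrel r xs ys * Lrel s ys zs) := by
            rw [ih, iSup_mul_distrib]
            simp only [mul_iSup_distrib]
        _ = ⨆ (y) (ys), r x y * Lrel r xs ys * (s y z * Lrel s ys zs) := by
            simp only [mul_mul_mul_comm]
        _ = ⨆ ys, Lrel r (x :: xs) ys * Lrel s ys (z :: zs) := by
            -- the empty intermediate list contributes `⊥`
            rw [iSup_list_eq_nil_sup_iSup_cons]
            simp [Lrel]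

end Quantale

/-- The extension of the list monad to `V`-relations is functorial and preserves
the involution. -/
theorem Lrel_functorial_and_involutive
    [IsQuantale V] {X Y Z : Type*} :
    -- L(1_X) = 1_{LX}
    (∀ xs ys : List X,
        Lrel (fun x x' : X => ⨆ _ : x = x', (1 : V)) xs ys =
          ⨆ _ : xs = ys, (1 : V)) ∧
    -- L(s ∘ r) = Ls ∘ Lr
    (∀ (r : X → Y → V) (s : Y → Z → V) (xs : List X) (zs : List Z),
        Lrel (fun x z => ⨆ y : Y, r x y * s y z) xs zs =
          ⨆ ys : List Y, Lrel r xs ys * Lrel s ys zs) ∧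
    -- L(r°) = (Lr)°
    (∀ (r : X → Y → V) (xs : List X) (ys : List Y),
        Lrel (fun y x => r x y) ys xs = Lrel r xs ys) :=
  ⟨Lrel_id, Lrel_comp, Lrel_flip⟩
end

section
/- Let (X, a) be an (L,V)-category. Then the free V-category on lists, (LX, La ∘ m_X°), is a V-category: 1_{LX} ≤ La ∘ m_X° and (La ∘ m_X°) ∘ (La ∘ m_X°) ≤ La ∘ m_X°, where m_X : L²X → LX is list concatenation regarded as a V-relation. -/
/-! A witness for `freeStr a xs ys` is a list `l` of lists with `l.flatten = xs`. Reflexivity is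
witnessed by the list of singletons. For transitivity, take witnesses `l` for `(xs, ys)` and `m`
for `(ys, zs)`, and cut `l` into the consecutive blocks `lᵢ` lying over the entries `mᵢ` of `m`
(`Lrel_append_right`). Transitivity of `a` collapses each `Lrel a lᵢ mᵢ * a mᵢ zᵢ` into
`a lᵢ.flatten zᵢ`, so the list of flattened blocks is a witness for `(xs, zs)`. -/

variable {V : Type*} [CommMonoid V] [CompleteLattice V]

/-- The `V`-relation `La ∘ m_X° : LX ⇸ LX`, where `m_X` is list concatenation. -/
def freeStr {X : Type*} (a : List X → X → V) : List X → List X → V :=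
  fun xs ys => ⨆ l : List (List X), (⨆ _ : l.flatten = xs, (1 : V)) * Lrel a l ys

section

variable [IsQuantale V] {X Y : Type*}

lemma Lrel_append_right (r : X → Y → V) (l : List X) (u v : List Y) :
    Lrel r l (u ++ v) = Lrel r (l.take u.length) u * Lrel r (l.drop u.length) v := by
  induction u generalizing l with
  | nil => simp [Lrel]
  | cons y u ih =>
    cases l with
    | nil => simp [Lrel]
    | cons x l => simp [Lrel, ih, mul_assoc]

lemma freeStr_eq_iSup (a : List X → X → V) (xs ys : List X) :
    freeStr a xs ys = ⨆ l : {l : List (List X) // l.flatten = xs}, Lrel a l ys := by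
  rw [← iSup_subtype' (f := fun l _ => Lrel a l ys)]
  refine iSup_congr fun l => ?_
  by_cases h : l.flatten = xs <;> simp [h]

lemma Lrel_le_freeStr (a : List X → X → V) {l : List (List X)} {xs : List X}
    (h : l.flatten = xs) (ys : List X) : Lrel a l ys ≤ freeStr a xs ys := by
  rw [freeStr_eq_iSup]
  exact le_iSup_of_le ⟨l, h⟩ le_rfl

lemma one_le_freeStr_nil (a : List X → X → V) : 1 ≤ freeStr a [] [] :=
  Lrel_le_freeStr a (l := []) rfl []

lemma mul_freeStr_le_freeStr_cons (a : List X → X → V) (w ws : List X) (z : X) (zs : List X) :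
    a w z * freeStr a ws zs ≤ freeStr a (w ++ ws) (z :: zs) := by
  rw [freeStr_eq_iSup a ws, Quantale.mul_iSup_distrib]
  exact iSup_le fun ⟨l, hl⟩ => Lrel_le_freeStr a (l := w :: l) (by simp [hl]) (z :: zs)

lemma one_le_freeStr_self (a : List X → X → V) (ha : ∀ x, 1 ≤ a [x] x) (xs : List X) :
    1 ≤ freeStr a xs xs := by
  induction xs with
  | nil => exact one_le_freeStr_nil a
  | cons x xs ih =>
    calc (1 : V) = 1 * 1 := (one_mul 1).symm
      _ ≤ a [x] x * freeStr a xs xs := mul_le_mul' (ha x) ih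
      _ ≤ freeStr a (x :: xs) (x :: xs) := mul_freeStr_le_freeStr_cons a [x] xs x xs

lemma Lrel_flatten_mul_Lrel_le (a : List X → X → V)
    (htrans : ∀ (l : List (List X)) (ws : List X) (z : X), Lrel a l ws * a ws z ≤ a l.flatten z)
    (m : List (List X)) (l : List (List X)) (zs : List X) :
    Lrel a l m.flatten * Lrel a m zs ≤ freeStr a l.flatten zs := by
  induction m generalizing l zs with
  | nil =>
    cases l <;> cases zs <;> simp [Lrel, one_le_freeStr_nil]
  | cons w m ih =>
    cases zs with
    | nil => simp [Lrel]
    | cons z zs =>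
      set l₁ := l.take w.length
      set l₂ := l.drop w.length
      calc Lrel a l (w :: m).flatten * Lrel a (w :: m) (z :: zs)
          = (Lrel a l₁ w * a w z) * (Lrel a l₂ m.flatten * Lrel a m zs) := by
            rw [List.flatten_cons, Lrel_append_right]; simp only [Lrel]; exact mul_mul_mul_comm ..
        _ ≤ a l₁.flatten z * freeStr a l₂.flatten zs := mul_le_mul' (htrans l₁ w z) (ih l₂ zs)
        _ ≤ freeStr a (l₁.flatten ++ l₂.flatten) (z :: zs) := mul_freeStr_le_freeStr_cons ..
        _ = freeStr a l.flatten (z :: zs) := by rw [← List.flatten_append, List.take_append_drop]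

end

/-- For an `(L,V)`-category `(X, a)`, the pair `(LX, La ∘ m_X°)` is a `V`-category. -/
theorem free_vcat_on_lists
    [IsQuantale V] {X : Type*}
    (a : List X → X → V)
    -- e_X° ≤ a
    (hunit : ∀ (xs : List X) (y : X), (⨆ _ : xs = [y], (1 : V)) ≤ a xs y)
    -- a • a ≤ a, where (a • a)(x̲, y) = ⨆ z̲, (La ∘ m_X°)(x̲, z̲) ⊗ a(z̲, y)
    (hcomp : ∀ (xs : List X) (y : X),
        (⨆ zs : List X, freeStr a xs zs * a zs y) ≤ a xs y) :
    -- 1_{LX} ≤ La ∘ m_X°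
    (∀ xs ys : List X, (⨆ _ : xs = ys, (1 : V)) ≤ freeStr a xs ys) ∧
    -- (La ∘ m_X°) ∘ (La ∘ m_X°) ≤ La ∘ m_X°
    (∀ xs zs : List X,
        (⨆ ys : List X, freeStr a xs ys * freeStr a ys zs) ≤ freeStr a xs zs) := by
  have hrefl (x : X) : 1 ≤ a [x] x := le_iSup_of_le rfl le_rfl |>.trans (hunit [x] x)
  have htrans (l : List (List X)) (ws : List X) (z : X) :
      Lrel a l ws * a ws z ≤ a l.flatten z :=
    (mul_le_mul' (Lrel_le_freeStr a rfl ws) le_rfl).trans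
      (le_iSup_of_le ws le_rfl |>.trans (hcomp l.flatten z))
  refine ⟨fun xs ys => iSup_le fun h => h ▸ one_le_freeStr_self a hrefl xs, fun xs zs => ?_⟩
  refine iSup_le fun ys => ?_
  rw [freeStr_eq_iSup a xs ys, freeStr_eq_iSup a ys zs]
  simp only [Quantale.iSup_mul_distrib, Quantale.mul_iSup_distrib, iSup_le_iff]
  rintro ⟨m, rfl⟩ ⟨l, rfl⟩
  exact Lrel_flatten_mul_Lrel_le a htrans m l zs
end
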